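/- arXiv:quant-ph/0208041 — 4 statements merged into one kernel-verified Lean document; each statement's English description precedes it below -/
import Mathlib

section
/- The partial transpose (with respect to the first subsystem) of the Bell decomposable state ρ = Σᵢ pᵢ |ψᵢ⟩⟨ψᵢ| is positive semidefinite if and only if the three inequalities (p₁+p₂)(p₃+p₄) ≥ (p₅−p₆)², (p₃+p₄)(p₅+p₆) ≥ (p₁−p₂)², and (p₅+p₆)(p₁+p₂) ≥ (p₃−p₄)² hold. -/
noncomputable section
open Matrix ComplexOrder

/-- The standard product basis vector `|ij⟩` of `ℂ²⊗ℂ³ ≅ ℂ⁶`, as a function. -/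
def ket (i : Fin 2) (j : Fin 3) : Fin 2 × Fin 3 → ℂ := fun x => if x = (i, j) then 1 else 0

/-- The six Bell states of `ℂ²⊗ℂ³`, as functions. -/
def bell : Fin 6 → (Fin 2 × Fin 3 → ℂ)
  | 0 => (Real.sqrt 2 : ℂ)⁻¹ • (ket 0 0 + ket 1 1)
  | 1 => (Real.sqrt 2 : ℂ)⁻¹ • (ket 0 0 - ket 1 1)
  | 2 => (Real.sqrt 2 : ℂ)⁻¹ • (ket 0 1 + ket 1 2)
  | 3 => (Real.sqrt 2 : ℂ)⁻¹ • (ket 0 1 - ket 1 2)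
  | 4 => (Real.sqrt 2 : ℂ)⁻¹ • (ket 0 2 + ket 1 0)
  | 5 => (Real.sqrt 2 : ℂ)⁻¹ • (ket 0 2 - ket 1 0)

/-- Outer product `|v⟩⟨w|` as a matrix. -/
def outer (v w : Fin 2 × Fin 3 → ℂ) : Matrix (Fin 2 × Fin 3) (Fin 2 × Fin 3) ℂ :=
  Matrix.vecMulVec v (star w)

/-- The Bell decomposable state `ρ = Σᵢ pᵢ |ψᵢ⟩⟨ψᵢ|`. -/
def ρBD (p : Fin 6 → ℝ) : Matrix (Fin 2 × Fin 3) (Fin 2 × Fin 3) ℂ :=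
  ∑ i, (p i : ℂ) • outer (bell i) (bell i)

/-- Partial transpose with respect to the first subsystem:
`⟨ij|ρ^{T₁}|kl⟩ = ⟨kj|ρ|il⟩`. -/
def partialTranspose (M : Matrix (Fin 2 × Fin 3) (Fin 2 × Fin 3) ℂ) :
    Matrix (Fin 2 × Fin 3) (Fin 2 × Fin 3) ℂ :=
  fun x y => M (y.1, x.2) (x.1, y.2)

/-!
Under the partial transpose the Bell decomposable state becomes a direct sum of three real
symmetric `2 × 2` blocks, `½ [[p₁+p₂, p₅−p₆], [p₅−p₆, p₃+p₄]]` on `(|11⟩, |23⟩)` and its two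
cyclic shifts on `(|12⟩, |21⟩)` and `(|13⟩, |22⟩)`. Such a block is positive semidefinite iff its
diagonal entries and its determinant are nonnegative; the diagonal entries are nonnegative
because the `pᵢ` are, and the determinants give the three inequalities.
-/

/-- The Hermitian form of the real symmetric matrix `!![a, c; c, b]` at `(u, v)`. -/
def blockForm (a b c : ℝ) (u v : ℂ) : ℝ :=
  a * Complex.normSq u + b * Complex.normSq v + 2 * c * (starRingEnd ℂ u * v).re

lemma ofReal_blockForm (a b c : ℝ) (u v : ℂ) :
    (blockForm a b c u v : ℂ) =
      a * (starRingEnd ℂ u * u) + b * (starRingEnd ℂ v * v) +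
        c * (starRingEnd ℂ u * v + starRingEnd ℂ v * u) := by
  apply Complex.ext <;> simp [blockForm, Complex.normSq_apply] <;> ring

lemma sq_re_conj_mul_le (u v : ℂ) :
    (starRingEnd ℂ u * v).re ^ 2 ≤ Complex.normSq u * Complex.normSq v := by
  simpa [sq, Complex.normSq_mul] using Complex.re_sq_le_normSq (starRingEnd ℂ u * v)

lemma forall_blockForm_nonneg_iff {a b c : ℝ} :
    (∀ u v, 0 ≤ blockForm a b c u v) ↔ 0 ≤ a ∧ 0 ≤ b ∧ c ^ 2 ≤ a * b := by
  constructor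
  · intro h
    have ha : 0 ≤ a := by simpa [blockForm] using h 1 0
    have hb : 0 ≤ b := by simpa [blockForm] using h 0 1
    -- restricted to `(t, 1)` with `t` real, the form is the quadratic `a t² + 2 c t + b`
    have hdisc : discrim a (2 * c) b ≤ 0 := discrim_le_zero fun t => by
      have := h t 1
      simp only [blockForm, Complex.normSq_ofReal, Complex.normSq_one, Complex.conj_ofReal,
        mul_one, Complex.ofReal_re] at this
      linarith
    rw [discrim] at hdisc
    exact ⟨ha, hb, by nlinarith⟩
  · rintro ⟨ha, hb, hc⟩ u v
    have hu := Complex.normSq_nonneg u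
    have hv := Complex.normSq_nonneg v
    set r := (starRingEnd ℂ u * v).re
    show 0 ≤ a * Complex.normSq u + b * Complex.normSq v + 2 * c * r
    have hcr : c ^ 2 * r ^ 2 ≤ (a * b) * (Complex.normSq u * Complex.normSq v) :=
      mul_le_mul hc (sq_re_conj_mul_le u v) (sq_nonneg r) (mul_nonneg ha hb)
    -- `a|u|² + b|v|² ≥ 2√(ab)|u||v| ≥ 2|c r|`
    nlinarith [sq_nonneg (a * Complex.normSq u - b * Complex.normSq v),
      mul_nonneg ha hu, mul_nonneg hb hv]

lemma Matrix.IsHermitian.partialTranspose {M : Matrix (Fin 2 × Fin 3) (Fin 2 × Fin 3) ℂ}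
    (hM : M.IsHermitian) : (partialTranspose M).IsHermitian := by
  ext x y
  exact hM.apply (y.1, x.2) (x.1, y.2)

lemma isHermitian_ρBD (p : Fin 6 → ℝ) : (ρBD p).IsHermitian :=
  isSelfAdjoint_sum _ fun i _ =>
    (posSemidef_vecMulVec_self_star (bell i)).isHermitian.smul (Complex.conj_ofReal (p i))

lemma dotProduct_partialTranspose_ρBD_mulVec (p : Fin 6 → ℝ) (x : Fin 2 × Fin 3 → ℂ) :
    star x ⬝ᵥ partialTranspose (ρBD p) *ᵥ x =
      ((blockForm (p 0 + p 1) (p 2 + p 3) (p 4 - p 5) (x (0, 0)) (x (1, 2)) +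
        blockForm (p 2 + p 3) (p 4 + p 5) (p 0 - p 1) (x (0, 1)) (x (1, 0)) +
        blockForm (p 4 + p 5) (p 0 + p 1) (p 2 - p 3) (x (0, 2)) (x (1, 1))) / 2 : ℝ) := by
  have hsqrt : ((Real.sqrt 2 : ℝ) : ℂ)⁻¹ ^ 2 = (2 : ℂ)⁻¹ := by
    rw [inv_pow, ← Complex.ofReal_pow, Real.sq_sqrt zero_le_two]
    norm_num
  simp only [dotProduct, mulVec, Fintype.sum_prod_type, Fin.sum_univ_two, Fin.sum_univ_three,
    partialTranspose, ρBD, Matrix.sum_apply, Fin.sum_univ_six, Matrix.smul_apply, outer,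
    vecMulVec_apply, bell, ket, Pi.smul_apply, Pi.add_apply, Pi.sub_apply, Prod.mk.injEq,
    smul_eq_mul, Pi.star_apply]
  norm_num [Fin.ext_iff, Prod.ext_iff, ofReal_blockForm]
  ring_nf
  rw [hsqrt]
  ring

lemma posSemidef_partialTranspose_ρBD_iff (p : Fin 6 → ℝ) :
    (partialTranspose (ρBD p)).PosSemidef ↔
      (∀ u v, 0 ≤ blockForm (p 0 + p 1) (p 2 + p 3) (p 4 - p 5) u v) ∧
      (∀ u v, 0 ≤ blockForm (p 2 + p 3) (p 4 + p 5) (p 0 - p 1) u v) ∧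
      (∀ u v, 0 ≤ blockForm (p 4 + p 5) (p 0 + p 1) (p 2 - p 3) u v) := by
  rw [posSemidef_iff_dotProduct_mulVec]
  simp only [dotProduct_partialTranspose_ρBD_mulVec, Complex.zero_le_real,
    le_div_iff₀ (zero_lt_two (α := ℝ)), zero_mul]
  constructor
  · rintro ⟨-, h⟩
    refine ⟨fun u v => ?_, fun u v => ?_, fun u v => ?_⟩
    · simpa [blockForm, Prod.ext_iff] using
        h fun y => if y = (0, 0) then u else if y = (1, 2) then v else 0
    · simpa [blockForm, Prod.ext_iff] using
        h fun y => if y = (0, 1) then u else if y = (1, 0) then v else 0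
    · simpa [blockForm, Prod.ext_iff] using
        h fun y => if y = (0, 2) then u else if y = (1, 1) then v else 0
  · rintro ⟨h₁, h₂, h₃⟩
    exact ⟨(isHermitian_ρBD p).partialTranspose, fun x =>
      add_nonneg (add_nonneg (h₁ (x (0, 0)) (x (1, 2))) (h₂ (x (0, 1)) (x (1, 0))))
        (h₃ (x (0, 2)) (x (1, 1)))⟩

theorem bellDecomposable_ppt_iff_general (p : Fin 6 → ℝ) (hp : ∀ i, 0 ≤ p i) :
    (partialTranspose (ρBD p)).PosSemidef ↔
      ((p 0 + p 1) * (p 2 + p 3) ≥ (p 4 - p 5)^2 ∧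
       (p 2 + p 3) * (p 4 + p 5) ≥ (p 0 - p 1)^2 ∧
       (p 4 + p 5) * (p 0 + p 1) ≥ (p 2 - p 3)^2) := by
  have h₀₁ : 0 ≤ p 0 + p 1 := add_nonneg (hp 0) (hp 1)
  have h₂₃ : 0 ≤ p 2 + p 3 := add_nonneg (hp 2) (hp 3)
  have h₄₅ : 0 ≤ p 4 + p 5 := add_nonneg (hp 4) (hp 5)
  simp only [posSemidef_partialTranspose_ρBD_iff, forall_blockForm_nonneg_iff, ge_iff_le,
    h₀₁, h₂₃, h₄₅, true_and]

/-- PPT criterion for Bell decomposable `2⊗3` states: the partial transpose of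
`ρ` is positive semidefinite iff the three inequalities hold. -/
theorem bellDecomposable_ppt_iff (p : Fin 6 → ℝ) (hp : ∀ i, 0 ≤ p i)
    (hsum : ∑ i, p i = 1) :
    (partialTranspose (ρBD p)).PosSemidef ↔
      ((p 0 + p 1) * (p 2 + p 3) ≥ (p 4 - p 5)^2 ∧
       (p 2 + p 3) * (p 4 + p 5) ≥ (p 0 - p 1)^2 ∧
       (p 4 + p 5) * (p 0 + p 1) ≥ (p 2 - p 3)^2) :=
  bellDecomposable_ppt_iff_general p hp
end
end

section
/- The eigenvalues of the 4×4 matrix U(ρ)U(ρ)† associated with a Bell decomposable state are λ₁ = λ₂ = A, λ₃ = B+C, λ₄ = B−C, where A = ((p₁−p₂)²+(p₃−p₄)²+(p₅−p₆)²)/4, B = ((p₁+p₂)²+(p₃+p₄)²+(p₅+p₆)²)/4, and C = ((p₁+p₂)(p₃+p₄)+(p₃+p₄)(p₅+p₆)+(p₅+p₆)(p₁+p₂))/4. -/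
noncomputable section
open Matrix ComplexOrder

/-- The realignment `U(ρ)`: `⟨E_{ij}|U(ρ)|E_{kl}⟩ = ⟨ik|ρ|jl⟩`, as a matrix with
rows indexed by `Fin 2 × Fin 2` and columns by `Fin 3 × Fin 3`. -/
def realign (M : Matrix (Fin 2 × Fin 3) (Fin 2 × Fin 3) ℂ) :
    Matrix (Fin 2 × Fin 2) (Fin 3 × Fin 3) ℂ :=
  fun ij kl => M (ij.1, kl.1) (ij.2, kl.2)

/-!
In the product basis, `ρBD p` only couples `|0j⟩` with `|1,j+1⟩`: it carries
`s_j = (p_{2j} + p_{2j+1})/2` on both diagonal entries and `d_j = (p_{2j} - p_{2j+1})/2` on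
the two off-diagonal ones. Hence the rows of `U(ρ)` indexed by `E₀₁` and `E₁₀` hold
`d₀, d₁, d₂` on disjoint off-diagonal positions, while the rows `E₀₀` and `E₁₁` hold
`(s₀, s₁, s₂)` and its cyclic shift `(s₂, s₀, s₁)` on the diagonal positions `E_{kk}`.
So `U U†` is `A = Σ d_j²` on `E₀₁, E₁₀` and `[[B, C], [C, B]]` on `E₀₀, E₁₁`, with
`B = Σ s_j²` and `C = Σ s_j s_{j+1}`, whose eigenvalues are `B ± C`.
-/

open Polynomial in
theorem charpoly_fin_four_corners {R : Type*} [CommRing R] (S T Q : R) :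
    (!![S, 0, 0, T; 0, Q, 0, 0; 0, 0, Q, 0; T, 0, 0, S]).charpoly =
      (X - C Q) ^ 2 * (X - C (S + T)) * (X - C (S - T)) := by
  rw [charpoly, det_succ_row_zero]
  simp [Fin.sum_univ_succ, det_fin_three, charmatrix_apply, Fin.succAbove, submatrix]
  ring

/-- `ρBD p` with rows and columns ordered `|00⟩, |01⟩, |02⟩, |10⟩, |11⟩, |12⟩`. -/
def ρBDFin6 (p : Fin 6 → ℝ) : Matrix (Fin 6) (Fin 6) ℂ :=
  !![((p 0 : ℂ) + p 1) / 2, 0, 0, 0, ((p 0 : ℂ) - p 1) / 2, 0;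
     0, ((p 2 : ℂ) + p 3) / 2, 0, 0, 0, ((p 2 : ℂ) - p 3) / 2;
     0, 0, ((p 4 : ℂ) + p 5) / 2, ((p 4 : ℂ) - p 5) / 2, 0, 0;
     0, 0, ((p 4 : ℂ) - p 5) / 2, ((p 4 : ℂ) + p 5) / 2, 0, 0;
     ((p 0 : ℂ) - p 1) / 2, 0, 0, 0, ((p 0 : ℂ) + p 1) / 2, 0;
     0, ((p 2 : ℂ) - p 3) / 2, 0, 0, 0, ((p 2 : ℂ) + p 3) / 2]

theorem ρBD_eq_submatrix (p : Fin 6 → ℝ) :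
    ρBD p = (ρBDFin6 p).submatrix finProdFinEquiv finProdFinEquiv := by
  ext ⟨i, a⟩ ⟨j, b⟩
  fin_cases i <;> fin_cases a <;> fin_cases j <;> fin_cases b <;>
    simp [ρBD, outer, bell, ket, Fin.sum_univ_six, vecMulVec_apply, Matrix.sum_apply, ρBDFin6,
      finProdFinEquiv, ← mul_inv, ← Complex.ofReal_mul] <;> ring

def bellA (p : Fin 6 → ℝ) : ℝ := ((p 0 - p 1) ^ 2 + (p 2 - p 3) ^ 2 + (p 4 - p 5) ^ 2) / 4

def bellB (p : Fin 6 → ℝ) : ℝ := ((p 0 + p 1) ^ 2 + (p 2 + p 3) ^ 2 + (p 4 + p 5) ^ 2) / 4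

def bellC (p : Fin 6 → ℝ) : ℝ :=
  ((p 0 + p 1) * (p 2 + p 3) + (p 2 + p 3) * (p 4 + p 5) + (p 4 + p 5) * (p 0 + p 1)) / 4

theorem realign_ρBD_mul_conjTranspose (p : Fin 6 → ℝ) :
    realign (ρBD p) * (realign (ρBD p))ᴴ =
      (!![(bellB p : ℂ), 0, 0, bellC p; 0, bellA p, 0, 0; 0, 0, bellA p, 0;
        bellC p, 0, 0, bellB p]).submatrix finProdFinEquiv finProdFinEquiv := by
  rw [ρBD_eq_submatrix]
  ext ⟨i, j⟩ ⟨k, l⟩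
  fin_cases i <;> fin_cases j <;> fin_cases k <;> fin_cases l <;>
    simp [mul_apply, Fintype.sum_prod_type, Fin.sum_univ_three, realign, ρBDFin6,
      finProdFinEquiv, bellA, bellB, bellC, map_ofNat] <;> ring

open Polynomial in
theorem realign_eigenvalues_general (p : Fin 6 → ℝ) :
    let A : ℝ := ((p 0 - p 1)^2 + (p 2 - p 3)^2 + (p 4 - p 5)^2) / 4
    let B : ℝ := ((p 0 + p 1)^2 + (p 2 + p 3)^2 + (p 4 + p 5)^2) / 4
    let C : ℝ := ((p 0 + p 1) * (p 2 + p 3) + (p 2 + p 3) * (p 4 + p 5)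
      + (p 4 + p 5) * (p 0 + p 1)) / 4
    (realign (ρBD p) * (realign (ρBD p))ᴴ).charpoly =
      (X - Polynomial.C ((A : ℂ)))^2 * (X - Polynomial.C ((B + C : ℝ) : ℂ))
        * (X - Polynomial.C ((B - C : ℝ) : ℂ)) := by
  intro A B C
  rw [realign_ρBD_mul_conjTranspose, ← Equiv.symm_symm finProdFinEquiv, ← reindex_apply,
    charpoly_reindex, charpoly_fin_four_corners, ← Complex.ofReal_add, ← Complex.ofReal_sub]
  rfl

open Polynomial in
/-- The eigenvalues of the `4×4` matrix `U(ρ)U(ρ)†` are `A, A, B+C, B−C`. -/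
theorem realign_eigenvalues (p : Fin 6 → ℝ) (hp : ∀ i, 0 ≤ p i)
    (hsum : ∑ i, p i = 1) :
    let A : ℝ := ((p 0 - p 1)^2 + (p 2 - p 3)^2 + (p 4 - p 5)^2) / 4
    let B : ℝ := ((p 0 + p 1)^2 + (p 2 + p 3)^2 + (p 4 + p 5)^2) / 4
    let C : ℝ := ((p 0 + p 1) * (p 2 + p 3) + (p 2 + p 3) * (p 4 + p 5)
      + (p 4 + p 5) * (p 0 + p 1)) / 4
    (realign (ρBD p) * (realign (ρBD p))ᴴ).charpoly =
      (X - Polynomial.C ((A : ℂ)))^2 * (X - Polynomial.C ((B + C : ℝ) : ℂ))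
        * (X - Polynomial.C ((B - C : ℝ) : ℂ)) :=
  realign_eigenvalues_general p
end
end

section
/- There exist nonnegative reals p₁,…,p₆ summing to 1 such that 2√A + √(B+C) + √(B−C) ≤ 1 while (p₃+p₄)(p₅+p₆) < (p₁−p₂)², where A, B, C are as defined. Hence the realignment criterion is strictly weaker than the PPT criterion on Bell decomposable 2⊗3 states. -/
/-- There is a Bell decomposable `2⊗3` state satisfying Rudolph's realignment
criterion `2√A + √(B+C) + √(B−C) ≤ 1` but violating the PPT inequality
`(p₃+p₄)(p₅+p₆) ≥ (p₁−p₂)²`: the realignment criterion is strictly weaker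
than PPT on these states. -/
theorem realignment_weaker_than_ppt :
    ∃ p : Fin 6 → ℝ, (∀ i, 0 ≤ p i) ∧ (∑ i, p i = 1) ∧
      (2 * Real.sqrt (((p 0 - p 1)^2 + (p 2 - p 3)^2 + (p 4 - p 5)^2) / 4)
        + Real.sqrt ((((p 0 + p 1)^2 + (p 2 + p 3)^2 + (p 4 + p 5)^2) / 4)
          + (((p 0 + p 1) * (p 2 + p 3) + (p 2 + p 3) * (p 4 + p 5)
            + (p 4 + p 5) * (p 0 + p 1)) / 4))
        + Real.sqrt ((((p 0 + p 1)^2 + (p 2 + p 3)^2 + (p 4 + p 5)^2) / 4)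
          - (((p 0 + p 1) * (p 2 + p 3) + (p 2 + p 3) * (p 4 + p 5)
            + (p 4 + p 5) * (p 0 + p 1)) / 4)) ≤ 1) ∧
      (p 2 + p 3) * (p 4 + p 5) < (p 0 - p 1)^2 := by
  /- With pair sums (a, b, b) and p₂ = 0, p₃ = p₄, p₅ = p₆ one gets √A = a/2, √(B−C) = (a−b)/2 and
  √(B+C) = √((a+b)² + 2b²)/2; a = 13/33, b = 10/33 make all three rational (23² + 2·10² = 27²),
  the realignment sum is 56/66, and (p₃+p₄)(p₅+p₆) = b² < a². -/
  refine ⟨![13/33, 0, 5/33, 5/33, 5/33, 5/33], ?_, ?_, ?_, ?_⟩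
  · intro i
    fin_cases i <;> norm_num
  all_goals simp [Fin.sum_univ_six]; norm_num
end

section
/- If x, y, z are nonnegative reals with x + y + z = 1 and the three PPT inequalities xy ≥ c₃², yz ≥ c₁², zx ≥ c₂² hold with cᵢ the differences within each pair, then the sum of the square roots of the eigenvalues satisfies 2√((c₁²+c₂²+c₃²)/4) + √((x²+y²+z²+xy+yz+zx)/4) + √((x²+y²+z²−xy−yz−zx)/4) ≤ 1. -/
set_option maxHeartbeats 1000000 in
theorem key (x y z a b d : ℝ)
    (ha1 : a ≤ x^2) (ha2 : a ≤ y*z) (hb1 : b ≤ y^2) (hb2 : b ≤ z*x)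
    (hd1 : d ≤ z^2) (hd2 : d ≤ x*y) :
    (a+b+d)*(x^2+y^2+z^2+x*y+y*z+z*x) ≤ (a+b+d)^2 + (x*y+y*z+z*x)^2 := by
  nlinarith [mul_nonneg (sub_nonneg.2 ha2) (sub_nonneg.2 hb2),
    mul_nonneg (sub_nonneg.2 hb2) (sub_nonneg.2 hd2),
    mul_nonneg (sub_nonneg.2 hd2) (sub_nonneg.2 ha2),
    mul_nonneg (sub_nonneg.2 ha1) (sub_nonneg.2 ha2),
    mul_nonneg (sub_nonneg.2 hb1) (sub_nonneg.2 hb2),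
    mul_nonneg (sub_nonneg.2 hd1) (sub_nonneg.2 hd2),
    sq_nonneg (x*y+y*z+z*x-a-b-d), sq_nonneg (x-y), sq_nonneg (y-z), sq_nonneg (z-x)]

set_option maxHeartbeats 1000000 in
theorem aux (s P : ℝ) (hs0 : 0 ≤ s) (hsP : s ≤ P) (hP13 : 3*P ≤ 1)
    (hkey : s*(1-P) ≤ s^2 + P^2) :
    2 * Real.sqrt (s/4) + Real.sqrt ((1-P)/4) + Real.sqrt ((1-3*P)/4) ≤ 1 := by
  have hP0 : 0 ≤ P := le_trans hs0 hsP
  have hKs : 0 ≤ P + P^2/16 - s := by nlinarith [sq_nonneg P]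
  have hprod : s * (1 - 3*P) ≤ (P + P^2/16 - s)^2 := by
    nlinarith [hkey, mul_nonneg (sq_nonneg P) (sub_nonneg.2 hsP), sq_nonneg (P^2)]
  set t : ℝ := Real.sqrt (s / 4) with htdef
  set W : ℝ := Real.sqrt ((1 - 3*P) / 4) with hWdef
  have ht0 : 0 ≤ t := Real.sqrt_nonneg _
  have hW0 : 0 ≤ W := Real.sqrt_nonneg _
  have ht2 : t^2 = s/4 := Real.sq_sqrt (by positivity)
  have hW2 : W^2 = (1-3*P)/4 := Real.sq_sqrt (by linarith)
  have hterm2 : Real.sqrt ((1 - P) / 4) ≤ 1/2 - P/4 := by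
    have h0 : (0:ℝ) ≤ 1/2 - P/4 := by linarith
    calc Real.sqrt ((1 - P) / 4) ≤ Real.sqrt ((1/2 - P/4)^2) := by
          apply Real.sqrt_le_sqrt; nlinarith [sq_nonneg P]
      _ = 1/2 - P/4 := Real.sqrt_sq h0
  have htW : t * W ≤ (P + P^2/16 - s)/4 := by
    have hle : (s/4) * ((1-3*P)/4) ≤ ((P + P^2/16 - s)/4)^2 := by nlinarith [hprod]
    calc t * W = Real.sqrt ((s/4) * ((1-3*P)/4)) := (Real.sqrt_mul (by positivity) _).symm
      _ ≤ Real.sqrt (((P + P^2/16 - s)/4)^2) := Real.sqrt_le_sqrt hle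
      _ = (P + P^2/16 - s)/4 := Real.sqrt_sq (by linarith)
  have hsq : (2*t + W)^2 ≤ (1/2 + P/4)^2 := by nlinarith [ht2, hW2, htW]
  have hmain : 2*t + W ≤ 1/2 + P/4 := by nlinarith [hsq, ht0, hW0, hP0]
  linarith [hterm2, hmain]

set_option maxHeartbeats 1000000 in
/-- PPT implies Rudolph's realignment criterion for Bell decomposable `2⊗3`
states: with `x = p₁+p₂`, `y = p₃+p₄`, `z = p₅+p₆` and differences
`c₁ = p₁−p₂`, `c₂ = p₃−p₄`, `c₃ = p₅−p₆`. -/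
theorem ppt_implies_realignment (x y z c₁ c₂ c₃ : ℝ)
    (hx : 0 ≤ x) (hy : 0 ≤ y) (hz : 0 ≤ z) (hsum : x + y + z = 1)
    (hc₁ : |c₁| ≤ x) (hc₂ : |c₂| ≤ y) (hc₃ : |c₃| ≤ z)
    (h₁ : x * y ≥ c₃^2) (h₂ : y * z ≥ c₁^2) (h₃ : z * x ≥ c₂^2) :
    2 * Real.sqrt ((c₁^2 + c₂^2 + c₃^2) / 4)
      + Real.sqrt ((x^2 + y^2 + z^2 + x*y + y*z + z*x) / 4)
      + Real.sqrt ((x^2 + y^2 + z^2 - x*y - y*z - z*x) / 4) ≤ 1 := by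
  obtain ⟨h1l, h1r⟩ := abs_le.mp hc₁
  obtain ⟨h2l, h2r⟩ := abs_le.mp hc₂
  obtain ⟨h3l, h3r⟩ := abs_le.mp hc₃
  have hc1x : c₁^2 ≤ x^2 := sq_le_sq' h1l h1r
  have hc2y : c₂^2 ≤ y^2 := sq_le_sq' h2l h2r
  have hc3z : c₃^2 ≤ z^2 := sq_le_sq' h3l h3r
  have e2 : x^2 + y^2 + z^2 + x*y + y*z + z*x = 1 - (x*y + y*z + z*x) := by
    linear_combination (x+y+z+1)*hsum
  have e3 : x^2 + y^2 + z^2 - x*y - y*z - z*x = 1 - 3*(x*y + y*z + z*x) := by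
    linear_combination (x+y+z+1)*hsum
  rw [e2, e3]
  apply aux
  · positivity
  · linarith
  · nlinarith [sq_nonneg (x-y), sq_nonneg (y-z), sq_nonneg (z-x)]
  · have := key x y z (c₁^2) (c₂^2) (c₃^2) hc1x h₂ hc2y h₃ hc3z h₁
    nlinarith [this]
end
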